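/- With h on ℂ^{m+n} given by [[0,0,Id_m],[0,-Id_{n-m},0],[Id_m,0,0]], the set of maximal isotropic subspaces transverse to v_∞ = span(e₁,…,e_m) is parametrized bijectively by M((n-m)×m,ℂ) × u(m) via (X,Y) ↦ column span of [Y + X*X/2; X; Id_m]. -/

import Mathlib

open Matrix Module

/-- The Hermitian pairing `h(u,v) = u* H v` associated to a matrix `H`. -/
noncomputable def sform {ι : Type*} [Fintype ι] (H : Matrix ι ι ℂ) (u v : ι → ℂ) : ℂ :=
  star u ⬝ᵥ H.mulVec v

/-- The Hermitian form of signature `(m, n)` (with `l = n - m`) on `ℂ^{m+n}` given by the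
block matrix `[[0,0,1],[0,-1,0],[1,0,0]]` with blocks of sizes `m`, `l`, `m`. -/
def Hmat (m l : ℕ) :
    Matrix (Fin m ⊕ (Fin l ⊕ Fin m)) (Fin m ⊕ (Fin l ⊕ Fin m)) ℂ :=
  fromBlocks 0 (fromCols 0 1) (fromRows 0 1) (fromBlocks (-1) 0 0 0)

/-- The maximal isotropic subspace `v_∞ = span(e₁,…,e_m)`, realized as the column span of
the stacked matrix `[1; 0; 0]`. -/
noncomputable def vinf (m l : ℕ) : Submodule ℂ ((Fin m ⊕ (Fin l ⊕ Fin m)) → ℂ) :=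
  LinearMap.range (Matrix.mulVecLin
    (fromRows (1 : Matrix (Fin m) (Fin m) ℂ)
      (fromRows (0 : Matrix (Fin l) (Fin m) ℂ) (0 : Matrix (Fin m) (Fin m) ℂ))))

/-!
The form `h` pairs the first block with the last one and is negative definite on the middle one.
If `z` is maximal isotropic and transverse to `v_∞`, a vector of `z` with vanishing last block is
`h`-orthogonal to all of `z ⊔ v_∞`, hence zero; so `z` projects isomorphically onto the last
block and is the column span of a unique matrix `[A; X; 1]`. On such a column span
`h(N x, N y) = x* (Aᴴ + A - XᴴX) y`, so isotropy says exactly that `Y = A - XᴴX/2` is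
anti-Hermitian.
-/

namespace LinearMap

theorem eq_of_range_eq_of_comp_eq_id {R M N : Type*} [Semiring R] [AddCommMonoid M]
    [AddCommMonoid N] [Module R M] [Module R N] {p : N →ₗ[R] M} {f g : M →ₗ[R] N}
    (hf : p ∘ₗ f = id) (hg : p ∘ₗ g = id) (h : range f = range g) : f = g := by
  ext x
  obtain ⟨y, hy⟩ : f x ∈ range g := h ▸ mem_range_self f x
  have hyx : y = x := by simpa [← comp_apply, hf, hg] using congr(p $hy)
  rw [← hy, hyx]

theorem exists_comp_eq_id_range_eq {K V W : Type*} [Field K] [AddCommGroup V] [AddCommGroup W]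
    [Module K V] [Module K W] [FiniteDimensional K V] (p : W →ₗ[K] V) (z : Submodule K W)
    [FiniteDimensional K z] (hp : Set.InjOn p z) (hz : finrank K z = finrank K V) :
    ∃ g : V →ₗ[K] W, p ∘ₗ g = id ∧ range g = z := by
  have hinj : Function.Injective (p ∘ₗ z.subtype) := fun x y hxy =>
    Subtype.ext (hp x.2 y.2 hxy)
  let e := (p ∘ₗ z.subtype).linearEquivOfInjective hinj hz
  refine ⟨z.subtype ∘ₗ e.symm.toLinearMap, ?_, ?_⟩
  · ext1 x
    exact e.apply_symm_apply x
  · rw [range_comp_of_range_eq_top _ e.symm.range, Submodule.range_subtype]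

end LinearMap

section Blocks

variable {R : Type*} [CommSemiring R] {k l m n : Type*}

def lastBlock : (k ⊕ (l ⊕ m) → R) →ₗ[R] (m → R) :=
  LinearMap.funLeft R R (Sum.inr ∘ Sum.inr)

@[simp]
theorem lastBlock_sumElim_sumElim (x : k → R) (y : l → R) (z : m → R) :
    lastBlock (Sum.elim x (Sum.elim y z)) = z :=
  rfl

@[simp]
theorem lastBlock_sumElim_zero (x : k → R) : lastBlock (Sum.elim x 0 : k ⊕ (l ⊕ m) → R) = 0 :=
  rfl

variable [Fintype n] [DecidableEq n]

/-- The column span of `[A; X; 1]` is the graph of `x ↦ (A x, X x)` over the last block. -/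
def graphMatrix (A : Matrix k n R) (X : Matrix l n R) : Matrix (k ⊕ (l ⊕ n)) n R :=
  fromRows A (fromRows X 1)

theorem graphMatrix_mulVec (A : Matrix k n R) (X : Matrix l n R) (x : n → R) :
    graphMatrix A X *ᵥ x = Sum.elim (A *ᵥ x) (Sum.elim (X *ᵥ x) x) := by
  simp [graphMatrix, fromRows_mulVec]

theorem lastBlock_comp_graphMatrix (A : Matrix k n R) (X : Matrix l n R) :
    lastBlock ∘ₗ (graphMatrix A X).mulVecLin = LinearMap.id :=
  LinearMap.ext fun x => by simp [graphMatrix_mulVec]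

theorem exists_graphMatrix_of_lastBlock_comp_eq_id
    {g : (n → R) →ₗ[R] (k ⊕ (l ⊕ n) → R)} (hg : lastBlock ∘ₗ g = LinearMap.id) :
    ∃ (A : Matrix k n R) (X : Matrix l n R), (graphMatrix A X).mulVecLin = g := by
  set N := LinearMap.toMatrix' g
  have hN : N.mulVecLin = g := Matrix.toLin'_toMatrix' g
  have hC : N.toRows₂.toRows₂ = 1 := by
    refine ext_iff_mulVec.2 fun x => ?_
    have hx : lastBlock (N.mulVecLin x) = x := by rw [hN]; exact congr($hg x)
    rw [one_mulVec]
    exact hx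
  refine ⟨N.toRows₁, N.toRows₂.toRows₁, ?_⟩
  rw [graphMatrix, ← hC, fromRows_toRows, fromRows_toRows, hN]

end Blocks

theorem sform_add_right {ι : Type*} [Fintype ι] (H : Matrix ι ι ℂ) (u v w : ι → ℂ) :
    sform H u (v + w) = sform H u v + sform H u w := by
  simp [sform, mulVec_add, dotProduct_add]

section Form

variable {m l : ℕ}

theorem sform_Hmat_sumElim (a a' c c' : Fin m → ℂ) (b b' : Fin l → ℂ) :
    sform (Hmat m l) (Sum.elim a (Sum.elim b c)) (Sum.elim a' (Sum.elim b' c')) =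
      star a ⬝ᵥ c' - star b ⬝ᵥ b' + star c ⬝ᵥ a' := by
  simp [sform, Hmat, fromBlocks_mulVec, fromCols_mulVec, fromRows_mulVec, Function.star_sumElim,
    sumElim_dotProduct_sumElim, neg_mulVec]
  ring

theorem sform_Hmat_graphMatrix (A A' : Matrix (Fin m) (Fin m) ℂ)
    (X X' : Matrix (Fin l) (Fin m) ℂ) (x y : Fin m → ℂ) :
    sform (Hmat m l) (graphMatrix A X *ᵥ x) (graphMatrix A' X' *ᵥ y) =
      star x ⬝ᵥ ((Aᴴ + A' - Xᴴ * X') *ᵥ y) := by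
  simp only [graphMatrix_mulVec, sform_Hmat_sumElim, star_mulVec, dotProduct_mulVec,
    add_mulVec, sub_mulVec, dotProduct_add, dotProduct_sub, ← mulVec_mulVec]
  ring

theorem sform_Hmat_sumElim_zero_right (v : Fin m ⊕ (Fin l ⊕ Fin m) → ℂ) (y : Fin m → ℂ) :
    sform (Hmat m l) v (Sum.elim y 0) = star (lastBlock v) ⬝ᵥ y := by
  rw [← Sum.elim_comp_inl_inr v, ← Sum.elim_comp_inl_inr (v ∘ Sum.inr), ← Sum.elim_zero_zero,
    sform_Hmat_sumElim]
  simp only [dotProduct_zero, sub_zero, zero_add, lastBlock_sumElim_sumElim]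

theorem sform_Hmat_sumElim_zero_left (x : Fin m → ℂ) (v : Fin m ⊕ (Fin l ⊕ Fin m) → ℂ) :
    sform (Hmat m l) (Sum.elim x 0) v = star x ⬝ᵥ lastBlock v := by
  rw [← Sum.elim_comp_inl_inr v, ← Sum.elim_comp_inl_inr (v ∘ Sum.inr), ← Sum.elim_zero_zero,
    sform_Hmat_sumElim]
  simp only [star_zero, zero_dotProduct, sub_zero, add_zero, lastBlock_sumElim_sumElim]

theorem mem_vinf_iff {v : Fin m ⊕ (Fin l ⊕ Fin m) → ℂ} :
    v ∈ vinf m l ↔ ∃ y, Sum.elim y (0 : Fin l ⊕ Fin m → ℂ) = v := by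
  simp [vinf, fromRows_mulVec]

end Form

theorem Matrix.eq_zero_of_forall_star_dotProduct_mulVec {R k n : Type*} [CommSemiring R]
    [StarRing R] [Fintype k] [Fintype n] {G : Matrix k n R}
    (h : ∀ x y, star x ⬝ᵥ (G *ᵥ y) = 0) : G = 0 := by
  refine ext_iff_mulVec.2 fun y => (zero_mulVec y).symm ▸ dotProduct_eq_zero _ fun w => ?_
  simpa [dotProduct_comm] using h (star w) y

theorem Matrix.conjTranspose_eq_neg_iff_add_half {n : Type*} (Y B : Matrix n n ℂ)
    (hB : B.IsHermitian) :
    Yᴴ = -Y ↔ (Y + (1 / 2 : ℂ) • B)ᴴ + (Y + (1 / 2 : ℂ) • B) = B := by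
  have hhalf : star (1 / 2 : ℂ) = 1 / 2 := by simp
  rw [conjTranspose_add, conjTranspose_smul, hB.eq, hhalf, ← sub_eq_zero (a := Yᴴ),
    ← sub_eq_zero (a := _ + _)]
  constructor <;> intro h <;> rw [← h] <;> module

section Transverse

variable {m l : ℕ} (A : Matrix (Fin m) (Fin m) ℂ) (X : Matrix (Fin l) (Fin m) ℂ)

theorem isotropic_range_graphMatrix_iff :
    (∀ u ∈ LinearMap.range (graphMatrix A X).mulVecLin,
      ∀ v ∈ LinearMap.range (graphMatrix A X).mulVecLin, sform (Hmat m l) u v = 0) ↔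
      Aᴴ + A = Xᴴ * X := by
  simp only [LinearMap.mem_range, forall_exists_index, forall_apply_eq_imp_iff, mulVecLin_apply,
    sform_Hmat_graphMatrix, ← sub_eq_zero (a := Aᴴ + A)]
  refine ⟨eq_zero_of_forall_star_dotProduct_mulVec, fun h x y => ?_⟩
  rw [h, zero_mulVec, dotProduct_zero]

theorem finrank_range_graphMatrix :
    finrank ℂ (LinearMap.range (graphMatrix A X).mulVecLin) = m := by
  rw [LinearMap.finrank_range_of_inj, finrank_fin_fun]
  exact Function.LeftInverse.injective (g := lastBlock)
    (LinearMap.congr_fun (lastBlock_comp_graphMatrix A X))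

theorem range_graphMatrix_inf_vinf :
    LinearMap.range (graphMatrix A X).mulVecLin ⊓ vinf m l = ⊥ := by
  rw [eq_bot_iff]
  rintro _ ⟨⟨x, rfl⟩, hv⟩
  obtain ⟨y, hy⟩ := mem_vinf_iff.1 hv
  have hx : x = 0 := by simpa [graphMatrix_mulVec] using congr(lastBlock $hy).symm
  simp [hx]

theorem nondegenerate_range_graphMatrix_sup_vinf :
    ∀ v ∈ LinearMap.range (graphMatrix A X).mulVecLin ⊔ vinf m l,
      (∀ w ∈ LinearMap.range (graphMatrix A X).mulVecLin ⊔ vinf m l,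
        sform (Hmat m l) v w = 0) → v = 0 := by
  intro v hv h
  obtain ⟨_, ⟨x, rfl⟩, _, hw, rfl⟩ := Submodule.mem_sup.1 hv
  obtain ⟨w, rfl⟩ := mem_vinf_iff.1 hw
  have hx : x = 0 := star_eq_zero.1 <| dotProduct_eq_zero _ fun y => by
    simpa [sform_Hmat_sumElim_zero_right, graphMatrix_mulVec] using
      h _ (Submodule.mem_sup_right (mem_vinf_iff.2 ⟨y, rfl⟩))
  subst hx
  have hw : w = 0 := star_eq_zero.1 <| dotProduct_eq_zero _ fun y => by
    simpa [sform_Hmat_sumElim_zero_left, graphMatrix_mulVec] using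
      h _ (Submodule.mem_sup_left (LinearMap.mem_range_self _ y))
  simp [hw]

end Transverse

theorem injOn_lastBlock_of_isotropic {m l : ℕ} {z : Submodule ℂ (Fin m ⊕ (Fin l ⊕ Fin m) → ℂ)}
    (hiso : ∀ u ∈ z, ∀ v ∈ z, sform (Hmat m l) u v = 0)
    (hnd : ∀ v ∈ z ⊔ vinf m l, (∀ w ∈ z ⊔ vinf m l, sform (Hmat m l) v w = 0) → v = 0) :
    Set.InjOn lastBlock (z : Set (Fin m ⊕ (Fin l ⊕ Fin m) → ℂ)) := by
  intro u hu v hv huv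
  have huv_mem := z.sub_mem hu hv
  rw [← sub_eq_zero]
  refine hnd _ (Submodule.mem_sup_left huv_mem) fun w hw => ?_
  obtain ⟨a, ha, _, hb, rfl⟩ := Submodule.mem_sup.1 hw
  obtain ⟨y, rfl⟩ := mem_vinf_iff.1 hb
  rw [sform_add_right, hiso _ huv_mem a ha, sform_Hmat_sumElim_zero_right, map_sub, huv,
    sub_self, star_zero, zero_dotProduct, add_zero]

/-- The set of maximal isotropic subspaces transverse to `v_∞` is parametrized bijectively
by `M((n-m)×m,ℂ) × u(m)` via `(X,Y) ↦ column span of [Y + XᴴX/2; X; 1]`. Here `l = n - m`;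
transversality to `v_∞` means trivial intersection together with nondegeneracy of `h`
on the span. -/
theorem stmt13 (m l : ℕ) :
    Set.BijOn
      (fun p : Matrix (Fin l) (Fin m) ℂ × Matrix (Fin m) (Fin m) ℂ =>
        LinearMap.range (Matrix.mulVecLin
          (fromRows (p.2 + (1 / 2 : ℂ) • (p.1ᴴ * p.1))
            (fromRows p.1 (1 : Matrix (Fin m) (Fin m) ℂ)))))
      {p : Matrix (Fin l) (Fin m) ℂ × Matrix (Fin m) (Fin m) ℂ | p.2ᴴ = -p.2}
      {z : Submodule ℂ ((Fin m ⊕ (Fin l ⊕ Fin m)) → ℂ) |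
        finrank ℂ z = m ∧
        (∀ u ∈ z, ∀ v ∈ z, sform (Hmat m l) u v = 0) ∧
        z ⊓ vinf m l = ⊥ ∧
        (∀ v ∈ z ⊔ vinf m l, (∀ w ∈ z ⊔ vinf m l, sform (Hmat m l) v w = 0) → v = 0)} := by
  refine ⟨?_, ?_, ?_⟩
  · rintro ⟨X, Y⟩ hY
    have hA := (conjTranspose_eq_neg_iff_add_half Y _ (isHermitian_conjTranspose_mul_self X)).1 hY
    exact ⟨finrank_range_graphMatrix _ X, (isotropic_range_graphMatrix_iff _ X).2 hA,
      range_graphMatrix_inf_vinf _ X, nondegenerate_range_graphMatrix_sup_vinf _ X⟩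
  · rintro ⟨X, Y⟩ - ⟨X', Y'⟩ - h
    have hN := LinearMap.eq_of_range_eq_of_comp_eq_id (lastBlock_comp_graphMatrix _ X)
      (lastBlock_comp_graphMatrix _ X') h
    obtain ⟨hA, hX1⟩ := fromRows_inj (mulVec_injective congr(⇑$hN))
    obtain rfl : X = X' := (fromRows_inj hX1).1
    exact Prod.ext rfl (add_right_cancel hA)
  · rintro z ⟨hrank, hiso, -, hnd⟩
    obtain ⟨g, hg, rfl⟩ := LinearMap.exists_comp_eq_id_range_eq lastBlock z
      (injOn_lastBlock_of_isotropic hiso hnd) (by rw [hrank, finrank_fin_fun])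
    obtain ⟨A, X, rfl⟩ := exists_graphMatrix_of_lastBlock_comp_eq_id hg
    refine ⟨(X, A - (1 / 2 : ℂ) • (Xᴴ * X)), ?_, by simp [graphMatrix]⟩
    rw [Set.mem_ofPred_eq,
      conjTranspose_eq_neg_iff_add_half _ _ (isHermitian_conjTranspose_mul_self X), sub_add_cancel]
    exact (isotropic_range_graphMatrix_iff A X).1 hiso
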